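/- arXiv:1501.00763 — 5 statements merged into one kernel-verified Lean document; each statement's English description precedes it below -/
import Mathlib

section
/- Let G be a group and H a normal subgroup of G with G/H finite. If π is an irreducible representation of G (over ℂ), then the restriction of π to H is a direct sum of finitely many irreducible representations of H. -/
noncomputable section

variable {G : Type*} [Group G]

/-- A submodule invariant under a representation. -/
def RepInvariant {V : Type*} [AddCommGroup V] [Module ℂ V]
    (π : Representation ℂ G V) (p : Submodule ℂ V) : Prop :=
  ∀ g : G, ∀ v ∈ p, π g v ∈ p

/-- An irreducible (simple) representation. -/
def RepIrreducible {V : Type*} [AddCommGroup V] [Module ℂ V]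
    (π : Representation ℂ G V) : Prop :=
  Nontrivial V ∧ ∀ p : Submodule ℂ V, RepInvariant π p → p = ⊥ ∨ p = ⊤

/-- Isomorphism of representations. -/
def RepIso {V W : Type*} [AddCommGroup V] [Module ℂ V] [AddCommGroup W] [Module ℂ W]
    (π : Representation ℂ G V) (σ : Representation ℂ G W) : Prop :=
  ∃ e : V ≃ₗ[ℂ] W, ∀ g v, e (π g v) = σ g (e v)

/-- `σ` occurs as a subrepresentation of `π`. -/
def RepContains {V W : Type*} [AddCommGroup V] [Module ℂ V] [AddCommGroup W] [Module ℂ W]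
    (π : Representation ℂ G V) (σ : Representation ℂ G W) : Prop :=
  ∃ j : W →ₗ[ℂ] V, Function.Injective j ∧ ∀ g w, j (σ g w) = π g (j w)

/-- Restriction of a representation to a subgroup. -/
def RepRes {V : Type*} [AddCommGroup V] [Module ℂ V] (H : Subgroup G)
    (π : Representation ℂ G V) : Representation ℂ ↥H V :=
  π.comp H.subtype

/-- The conjugation automorphism `h ↦ g h g⁻¹` of a normal subgroup. -/
def conjHom (H : Subgroup G) [hH : H.Normal] (g : G) : ↥H →* ↥H where
  toFun h := ⟨g * (h : G) * g⁻¹, hH.conj_mem _ h.2 g⟩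
  map_one' := by ext; simp
  map_mul' a b := by ext; simp

/-- The conjugate representation `ρ^g : h ↦ ρ(g h g⁻¹)`. -/
def RepConj {W : Type*} [AddCommGroup W] [Module ℂ W] {H : Subgroup G} [H.Normal]
    (ρ : Representation ℂ ↥H W) (g : G) : Representation ℂ ↥H W :=
  ρ.comp (conjHom H g)

/-- The subrepresentation on an invariant submodule. -/
def RepSub {V : Type*} [AddCommGroup V] [Module ℂ V] (π : Representation ℂ G V)
    (p : Submodule ℂ V) (hp : RepInvariant π p) : Representation ℂ G ↥p where
  toFun g := (π g).restrict (hp g)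
  map_one' := by ext v; simp [LinearMap.restrict_apply]
  map_mul' a b := by ext v; simp [LinearMap.restrict_apply]

/-- `π` is a (finite) direct sum of irreducible subrepresentations. -/
def RepFiniteSemisimple {V : Type*} [AddCommGroup V] [Module ℂ V]
    (π : Representation ℂ G V) : Prop :=
  ∃ (n : ℕ) (p : Fin n → Submodule ℂ V) (hp : ∀ i, RepInvariant π (p i)),
    (∀ i, RepIrreducible (RepSub π (p i) (hp i))) ∧ DirectSum.IsInternal p

/-- Schur's lemma holds for `ρ`: every self-intertwiner is a scalar. -/
def RepSchur {H : Type*} [Group H] {W : Type*} [AddCommGroup W] [Module ℂ W]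
    (ρ : Representation ℂ H W) : Prop :=
  ∀ f : W →ₗ[ℂ] W, (∀ h w, f (ρ h w) = ρ h (f w)) → ∃ c : ℂ, f = c • LinearMap.id

/-- The space of the induced representation `Ind_H^G ρ`. -/
def IndSpace {W : Type*} [AddCommGroup W] [Module ℂ W] (H : Subgroup G)
    (ρ : Representation ℂ ↥H W) : Submodule ℂ (G → W) where
  carrier := {f | ∀ (g : G) (h : ↥H), f (g * h) = ρ h⁻¹ (f g)}
  add_mem' := by intro a b ha hb g h; simp [ha g h, hb g h]
  zero_mem' := by intro g h; simp
  smul_mem' := by intro c f hf g h; simp [hf g h]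

/-- The induced representation `Ind_H^G ρ`, with `(x • f)(g) = f (x⁻¹ g)`. -/
def IndRep {W : Type*} [AddCommGroup W] [Module ℂ W] (H : Subgroup G)
    (ρ : Representation ℂ ↥H W) : Representation ℂ G ↥(IndSpace H ρ) where
  toFun x :=
    { toFun := fun f => ⟨fun g => (f : G → W) (x⁻¹ * g), by
        intro g h
        have := f.2 (x⁻¹ * g) h
        simpa [mul_assoc] using this⟩
      map_add' := by intro a b; ext g; simp
      map_smul' := by intro c a; ext g; simp }
  map_one' := by ext f g; simp
  map_mul' a b := by ext f g; simp [mul_assoc]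

/-- The twist `π ⊗ ω` of a representation by a character. -/
def TwistRep {V : Type*} [AddCommGroup V] [Module ℂ V] (π : Representation ℂ G V)
    (ω : G →* ℂˣ) : Representation ℂ G V where
  toFun g := (ω g : ℂ) • π g
  map_one' := by simp
  map_mul' a b := by
    ext v
    simp [Module.End.mul_apply, map_mul, smul_smul, mul_comm]

/-- The direct sum `⊕_i σ_i` of a (finite) family of representations on the same space. -/
def PiRep {ι : Type*} {W : Type*} [AddCommGroup W] [Module ℂ W]
    (σ : ι → Representation ℂ G W) : Representation ℂ G (ι → W) where
  toFun g := LinearMap.pi fun i => (σ i g).comp (LinearMap.proj i)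
  map_one' := by ext v i; simp
  map_mul' a b := by ext v i; simp

end

/-!
Irreducibility makes `V` cyclic over `ℂ[G]`, so translating a nonzero vector by coset
representatives shows that `V` is finitely generated over `ℂ[H]`; hence it has a maximal
`ℂ[H]`-submodule `m`. Since `H` is normal, each translate `π g • m` is again a maximal
`ℂ[H]`-submodule and depends only on `g H`. The intersection of these finitely many translates is
`G`-invariant and proper, hence zero, so `V` embeds into the finite product of the simple modules
`V ⧸ (π g • m)`: it is semisimple and Noetherian, i.e. a finite direct sum of simple modules.
-/

open scoped MonoidAlgebra

theorem IsSemisimpleModule.of_isCoatom_of_iInf_eq_bot {R M ι : Type*} [Ring R] [AddCommGroup M]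
    [Module R M] [Finite ι] {m : ι → Submodule R M} (hm : ∀ i, IsCoatom (m i))
    (h : ⨅ i, m i = ⊥) : IsSemisimpleModule R M := by
  have (i : ι) : IsSimpleModule R (M ⧸ m i) := isSimpleModule_iff_isCoatom.mpr (hm i)
  refine .of_injective (LinearMap.pi fun i ↦ (m i).mkQ) ?_
  rw [← LinearMap.ker_eq_bot, LinearMap.ker_pi]
  simpa using h

theorem IsSemisimpleModule.exists_isInternal_fin_isSimpleModule (R M : Type*) [Ring R]
    [AddCommGroup M] [Module R M] [IsSemisimpleModule R M] [IsNoetherian R M] :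
    ∃ (n : ℕ) (q : Fin n → Submodule R M),
      (∀ i, IsSimpleModule R (q i)) ∧ DirectSum.IsInternal q := by
  obtain ⟨s, hind, htop, hsimple⟩ := exists_sSupIndep_sSup_simples_eq_top R M
  have := (WellFoundedGT.finite_of_sSupIndep hind).to_subtype
  let e := Finite.equivFin s
  refine ⟨Nat.card s, fun i ↦ e.symm i, fun i ↦ hsimple _ (e.symm i).2,
    DirectSum.isInternal_submodule_of_iSupIndep_of_iSup_eq_top ?_ ?_⟩
  · exact ((sSupIndep_iff s).mp hind).comp e.symm.injective
  · rw [← htop, sSup_eq_iSup', ← e.symm.iSup_comp]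

namespace Subrepresentation

variable {k K W : Type*} [CommRing k] [Monoid K] [AddCommGroup W] [Module k W]
  {ρ : Representation k K W}

def toRepresentationOrderIsoIic (σ : Subrepresentation ρ) :
    Subrepresentation σ.toRepresentation ≃o Set.Iic σ where
  toFun τ := ⟨⟨τ.toSubmodule.map σ.toSubmodule.subtype, by
      rintro g _ ⟨w, hw, rfl⟩
      exact ⟨_, τ.apply_mem_toSubmodule g hw, rfl⟩⟩, by
      rintro _ ⟨w, -, rfl⟩
      exact w.2⟩
  invFun τ := ⟨τ.1.toSubmodule.comap σ.toSubmodule.subtype, fun g w hw ↦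
    τ.1.apply_mem_toSubmodule g hw⟩
  left_inv τ := by
    ext1
    exact Submodule.comap_map_eq_of_injective σ.toSubmodule.injective_subtype _
  right_inv τ := by
    ext1; ext1
    exact (Submodule.map_comap_subtype _ _).trans (inf_eq_right.mpr τ.2)
  map_rel_iff' := Submodule.map_le_map_iff_of_injective σ.toSubmodule.injective_subtype _ _

theorem isIrreducible_toRepresentation_iff_isAtom {k : Type*} [Field k] [Module k W]
    {ρ : Representation k K W} (σ : Subrepresentation ρ) :
    σ.toRepresentation.IsIrreducible ↔ IsAtom σ :=
  σ.toRepresentationOrderIsoIic.isSimpleOrder_iff.trans Set.isSimpleOrder_Iic_iff_isAtom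

end Subrepresentation

section

variable {K W : Type*} [Group K] [AddCommGroup W] [Module ℂ W] (ρ : Representation ℂ K W)

theorem repIrreducible_iff_isIrreducible : RepIrreducible ρ ↔ ρ.IsIrreducible := by
  have hnt : Nontrivial (Subrepresentation ρ) ↔ Nontrivial W := by
    rw [← Submodule.nontrivial_iff ℂ (M := W), ← not_subsingleton_iff_nontrivial,
      ← not_subsingleton_iff_nontrivial,
      ← subsingleton_iff_bot_eq_top (α := Subrepresentation ρ),
      ← subsingleton_iff_bot_eq_top (α := Submodule ℂ W)]
    exact (Subrepresentation.toSubmodule_injective.eq_iff (a := ⊥) (b := ⊤)).symm.not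
  refine ⟨fun ⟨hW, h⟩ ↦ ?_, fun h ↦ ⟨hnt.mp h.toNontrivial, fun p hp ↦ ?_⟩⟩
  · have := hnt.mpr hW
    exact ⟨fun σ ↦ (h σ.toSubmodule σ.apply_mem_toSubmodule).imp
      Subrepresentation.ext Subrepresentation.ext⟩
  · exact (h.eq_bot_or_eq_top ⟨p, hp⟩).imp (congrArg Subrepresentation.toSubmodule)
      (congrArg Subrepresentation.toSubmodule)

theorem repFiniteSemisimple_of_isSemisimpleModule [IsSemisimpleModule ℂ[K] ρ.asModule]
    [IsNoetherian ℂ[K] ρ.asModule] : RepFiniteSemisimple ρ := by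
  obtain ⟨n, q, hq, hint⟩ :=
    IsSemisimpleModule.exists_isInternal_fin_isSimpleModule ℂ[K] ρ.asModule
  let σ i := Subrepresentation.ofSubmodule' (q i)
  refine ⟨n, fun i ↦ (σ i).toSubmodule, fun i ↦ (σ i).apply_mem_toSubmodule, fun i ↦ ?_,
    hint⟩
  change RepIrreducible (σ i).toRepresentation
  rw [repIrreducible_iff_isIrreducible,
    Subrepresentation.isIrreducible_toRepresentation_iff_isAtom,
    ← Subrepresentation.subrepresentationSubmoduleOrderIso.isAtom_iff,
    ← isSimpleModule_iff_isAtom]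
  exact hq i

end

section Restriction

variable {G V : Type*} [Group G] [AddCommGroup V] [Module ℂ V] (π : Representation ℂ G V)

theorem span_orbit_eq_top (hπ : RepIrreducible π) {v : V} (hv : v ≠ 0) :
    Submodule.span ℂ (Set.range fun g ↦ π g v) = ⊤ := by
  set S := Submodule.span ℂ (Set.range fun g ↦ π g v)
  refine (hπ.2 S fun g w hw ↦ ?_).resolve_left fun h ↦ hv ?_
  · have : S ≤ S.comap (π g) := Submodule.span_le.mpr <| by
      rintro _ ⟨g', rfl⟩
      exact Submodule.subset_span ⟨g * g', by simp⟩
    exact this hw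
  · have : π 1 v ∈ S := Submodule.subset_span ⟨1, rfl⟩
    rwa [h, Submodule.mem_bot, map_one, Module.End.one_apply] at this

variable {H : Subgroup G} [H.Normal]

def comapSubrepresentation (g : G) (σ : Subrepresentation (RepRes H π)) :
    Subrepresentation (RepRes H π) where
  toSubmodule := σ.toSubmodule.comap (π g)
  apply_mem_toSubmodule h v hv := by
    have hmem : g * h * g⁻¹ ∈ H := Subgroup.Normal.conj_mem ‹_› _ h.2 g
    simpa [RepRes, ← Module.End.mul_apply, ← map_mul, mul_assoc] using
      σ.apply_mem_toSubmodule ⟨_, hmem⟩ hv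

def translateSubrepresentation (g : G) :
    Subrepresentation (RepRes H π) ≃o Subrepresentation (RepRes H π) where
  toFun := comapSubrepresentation π g⁻¹
  invFun := comapSubrepresentation π g
  left_inv σ := by ext; simp [comapSubrepresentation]
  right_inv σ := by ext; simp [comapSubrepresentation]
  map_rel_iff' := Submodule.comap_le_comap_iff_of_surjective (π.apply_bijective g⁻¹).2

noncomputable def translateSubmodule (g : G) :
    Submodule ℂ[H] (RepRes H π).asModule ≃o Submodule ℂ[H] (RepRes H π).asModule :=
  Subrepresentation.subrepresentationSubmoduleOrderIso.symm.trans
    ((translateSubrepresentation π g).trans Subrepresentation.subrepresentationSubmoduleOrderIso)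

variable {π}

theorem mem_translateSubmodule {g : G} {N : Submodule ℂ[H] (RepRes H π).asModule}
    {x : (RepRes H π).asModule} : x ∈ translateSubmodule π g N ↔ π g⁻¹ x ∈ N :=
  Iff.rfl

theorem translateSubmodule_mul (g g' : G) (N : Submodule ℂ[H] (RepRes H π).asModule) :
    translateSubmodule π (g * g') N = translateSubmodule π g (translateSubmodule π g' N) := by
  ext x
  change π (g * g')⁻¹ x ∈ N ↔ π g'⁻¹ (π g⁻¹ x) ∈ N
  rw [mul_inv_rev, map_mul]
  rfl

theorem translateSubmodule_of_mem {h : G} (hh : h ∈ H)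
    (N : Submodule ℂ[H] (RepRes H π).asModule) :
    translateSubmodule π h N = N := by
  ext x
  rw [mem_translateSubmodule]
  let σ := Subrepresentation.ofSubmodule' N
  refine ⟨fun hx ↦ ?_, fun hx ↦ σ.apply_mem_toSubmodule ⟨h⁻¹, inv_mem hh⟩ hx⟩
  exact π.self_inv_apply h x ▸ σ.apply_mem_toSubmodule ⟨h, hh⟩ hx

theorem translateSubmodule_eq_of_mk_eq {g g' : G} (hg : (g : G ⧸ H) = g')
    (N : Submodule ℂ[H] (RepRes H π).asModule) :
    translateSubmodule π g N = translateSubmodule π g' N := by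
  rw [← mul_inv_cancel_left g g', translateSubmodule_mul,
    translateSubmodule_of_mem (QuotientGroup.eq.mp hg)]

theorem iInf_translateSubmodule_out_eq_bot (hπ : RepIrreducible π)
    {m : Submodule ℂ[H] (RepRes H π).asModule} (hm : m ≠ ⊤) :
    ⨅ q : G ⧸ H, translateSubmodule π q.out m = ⊥ := by
  set N := ⨅ q : G ⧸ H, translateSubmodule π q.out m
  have hfix (g : G) : translateSubmodule π g N = N := by
    have hout (q : G ⧸ H) :
        translateSubmodule π (g * q.out) m = translateSubmodule π (g • q).out m :=
      translateSubmodule_eq_of_mk_eq (by rw [QuotientGroup.out_eq', ← smul_eq_mul,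
        ← MulAction.Quotient.smul_mk, QuotientGroup.out_eq']) m
    simp_rw [N, OrderIso.map_iInf, ← translateSubmodule_mul, hout]
    exact (MulAction.surjective (β := G ⧸ H) g).iInf_comp fun q ↦ translateSubmodule π q.out m
  have hinv : RepInvariant π (Subrepresentation.ofSubmodule' N).toSubmodule := fun g v hv ↦ by
    have : π g⁻¹⁻¹ v ∈ (Subrepresentation.ofSubmodule' N).toSubmodule :=
      (hfix g⁻¹).ge hv
    rwa [inv_inv] at this
  let e := (Subrepresentation.subrepresentationSubmoduleOrderIso (ρ := RepRes H π)).symm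
  rcases hπ.2 _ hinv with h | h
  · exact (map_eq_bot_iff e).mp (Subrepresentation.ext h)
  · refine absurd ((map_eq_top_iff (translateSubmodule π (1 : G ⧸ H).out)).mp ?_) hm
    rw [eq_top_iff, ← (map_eq_top_iff e).mp (Subrepresentation.ext h)]
    exact iInf_le _ _

theorem finite_asModule_repRes [Finite (G ⧸ H)] (hπ : RepIrreducible π) :
    Module.Finite ℂ[H] (RepRes H π).asModule := by
  have := hπ.1
  obtain ⟨v, hv⟩ := exists_ne (0 : V)
  let S := Submodule.span ℂ[H]
    (Set.range fun q : G ⧸ H ↦ (RepRes H π).asModuleEquiv.symm (π q.out v))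
  have horbit (g : G) : π g v ∈ (Subrepresentation.ofSubmodule' S).toSubmodule := by
    have hmem : g * (g : G ⧸ H).out⁻¹ ∈ H :=
      ‹H.Normal›.mem_comm (QuotientGroup.eq.mp (QuotientGroup.out_eq' _))
    convert (Subrepresentation.ofSubmodule' S).apply_mem_toSubmodule ⟨_, hmem⟩
      (show _ ∈ S from Submodule.subset_span ⟨(g : G ⧸ H), rfl⟩) using 1
    change π g v = π (g * _⁻¹) (π _ v)
    rw [map_mul, Module.End.mul_apply, π.inv_self_apply]
  have hspan := Submodule.span_le.mpr (Set.range_subset_iff.mpr horbit)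
  rw [span_orbit_eq_top π hπ hv] at hspan
  rw [Module.finite_def, Submodule.fg_def]
  exact ⟨_, Set.finite_range _, eq_top_iff.mpr fun x _ ↦ hspan trivial⟩

theorem isSemisimpleModule_asModule_repRes [Finite (G ⧸ H)] (hπ : RepIrreducible π) :
    IsSemisimpleModule ℂ[H] (RepRes H π).asModule := by
  have := finite_asModule_repRes (H := H) hπ
  have : Nontrivial (RepRes H π).asModule := hπ.1
  obtain ⟨m, hm⟩ := IsCoatomic.exists_coatom (α := Submodule ℂ[H] (RepRes H π).asModule)
  exact IsSemisimpleModule.of_isCoatom_of_iInf_eq_bot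
    (fun q : G ⧸ H ↦ ((translateSubmodule π q.out).isCoatom_iff m).mpr hm)
    (iInf_translateSubmodule_out_eq_bot hπ hm.1)

end Restriction

/-- If `H ⊴ G` has finite index and `π` is an irreducible complex representation of `G`,
then the restriction of `π` to `H` is a finite direct sum of irreducible representations. -/
theorem statement0 {G : Type} [Group G] (H : Subgroup G) [H.Normal]
    (hfin : Finite (G ⧸ H)) {V : Type} [AddCommGroup V] [Module ℂ V]
    (π : Representation ℂ G V) (hπ : RepIrreducible π) :
    RepFiniteSemisimple (RepRes H π) := by
  have := isSemisimpleModule_asModule_repRes (H := H) hπ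
  have := finite_asModule_repRes (H := H) hπ
  exact repFiniteSemisimple_of_isSemisimpleModule (RepRes H π)
end

section
/- Let G be a group and H a normal subgroup with G/H finite. If π is an irreducible representation of G and ρ an irreducible subrepresentation of Res^G_H π, then the irreducible constituents of Res^G_H π are exactly the G-conjugates ρ^g of ρ, up to isomorphism. -/
/-!
Let `j : ρ ↪ Res_H π`. For `g ∈ G` the map `π g⁻¹ ∘ j` embeds the conjugate `ρ^g`, and the sum
of the images of these embeddings is a nonzero `G`-invariant subspace, hence all of `V`. An
irreducible `σ ↪ Res_H π` is generated by any nonzero vector, and such a vector lies in a finite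
sum `Y₁ + ⋯ + Yₙ` of these images, so `σ` does too. Inducting on `n`, we may assume `σ` is not
contained in `R = Y₁ + ⋯ + Yₙ₋₁`; then `R` meets both `σ` and `Yₙ ≅ ρ^g` trivially, and in
`V ⧸ R` the image of `σ` lies in that of `ρ^g`. Irreducibility of `ρ^g` turns the resulting
embedding `σ ↪ ρ^g` into an isomorphism.
-/

namespace Representation

variable {k G A B C D : Type*} [Field k] [Monoid G] [AddCommGroup A] [Module k A]
  [AddCommGroup B] [Module k B] [AddCommGroup C] [Module k C] [AddCommGroup D] [Module k D]
  {ρ : Representation k G A} {σ : Representation k G B} {τ : Representation k G C}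

theorem IsIntertwiningMap.comp {υ : Representation k G D} {f : A →ₗ[k] B} {g : B →ₗ[k] D}
    (hg : σ.IsIntertwiningMap υ g) (hf : ρ.IsIntertwiningMap σ f) :
    ρ.IsIntertwiningMap υ (g ∘ₗ f) :=
  ⟨fun x v => by simp only [LinearMap.comp_apply, hf.isIntertwining, hg.isIntertwining]⟩

theorem exists_isIntertwiningMap_comp_eq {a : A →ₗ[k] C} {b : B →ₗ[k] C}
    (ha : ρ.IsIntertwiningMap τ a) (hb : σ.IsIntertwiningMap τ b) (hb_inj : Function.Injective b)
    (hab : LinearMap.range a ≤ LinearMap.range b) :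
    ∃ ψ : A →ₗ[k] B, ρ.IsIntertwiningMap σ ψ ∧ b ∘ₗ ψ = a := by
  obtain ⟨c, hc⟩ := b.exists_leftInverse_of_injective (LinearMap.ker_eq_bot.2 hb_inj)
  have hbc : b ∘ₗ c ∘ₗ a = a := by
    ext v
    obtain ⟨u, hu⟩ := hab ⟨v, rfl⟩
    simp only [LinearMap.comp_apply, ← hu, ← LinearMap.comp_apply c b, hc, LinearMap.id_apply]
  refine ⟨c ∘ₗ a, ⟨fun x v => hb_inj ?_⟩, hbc⟩
  rw [hb.isIntertwining, ← LinearMap.comp_apply b, hbc, ← LinearMap.comp_apply b, hbc,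
    ha.isIntertwining]

end Representation

open Representation LinearMap

section

variable {G V W W' : Type*} [Group G] [AddCommGroup V] [Module ℂ V] [AddCommGroup W] [Module ℂ W]
  [AddCommGroup W'] [Module ℂ W'] {π : Representation ℂ G V} {σ : Representation ℂ G W'}
  {τ : Representation ℂ G W}

theorem RepInvariant.comap {p : Submodule ℂ V} (hp : RepInvariant π p) {f : W' →ₗ[ℂ] V}
    (hf : σ.IsIntertwiningMap π f) : RepInvariant σ (p.comap f) := fun h w hw => by
  simpa only [Submodule.mem_comap, hf.isIntertwining] using hp h _ hw

theorem repInvariant_range {f : W' →ₗ[ℂ] V} (hf : σ.IsIntertwiningMap π f) :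
    RepInvariant π (range f) := by
  rintro h _ ⟨w, rfl⟩
  exact ⟨σ h w, hf.isIntertwining h w⟩

theorem repInvariant_iSup_of_forall_exists {ι : Sort*} {p : ι → Submodule ℂ V}
    (hp : ∀ h i, ∃ i', ∀ v ∈ p i, π h v ∈ p i') : RepInvariant π (⨆ i, p i) := by
  intro h v hv
  refine Submodule.iSup_induction p (motive := fun v => π h v ∈ ⨆ i, p i) hv ?_ ?_ ?_
  · intro i v hv
    obtain ⟨i', hi'⟩ := hp h i
    exact Submodule.mem_iSup_of_mem i' (hi' v hv)
  · simp
  · intro v w hv hw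
    simpa only [map_add] using add_mem hv hw

theorem RepInvariant.iSup {ι : Sort*} {p : ι → Submodule ℂ V} (hp : ∀ i, RepInvariant π (p i)) :
    RepInvariant π (⨆ i, p i) :=
  repInvariant_iSup_of_forall_exists fun h i => ⟨i, hp i h⟩

theorem RepIrreducible.comp_of_surjective {K : Type*} [Group K] {ρ : Representation ℂ K W}
    (hρ : RepIrreducible ρ) {f : G →* K} (hf : Function.Surjective f) :
    RepIrreducible (ρ.comp f) := by
  refine ⟨hρ.1, fun p hp => hρ.2 p fun k v hv => ?_⟩
  obtain ⟨h, rfl⟩ := hf k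
  exact hp h v hv

theorem RepIrreducible.range_le_of_mem (hσ : RepIrreducible σ) {f : W' →ₗ[ℂ] V}
    (hf : σ.IsIntertwiningMap π f) {p : Submodule ℂ V} (hp : RepInvariant π p) {w : W'}
    (hw : w ≠ 0) (hfw : f w ∈ p) : range f ≤ p := by
  refine range_le_iff_comap.2 ((hσ.2 _ (hp.comap hf)).resolve_left fun hbot => hw ?_)
  rw [← Submodule.mem_bot ℂ, ← hbot]
  exact hfw

theorem RepIrreducible.injective_mkQ_comp (hσ : RepIrreducible σ) {f : W' →ₗ[ℂ] V}
    (hf : σ.IsIntertwiningMap π f) {p : Submodule ℂ V} (hp : RepInvariant π p)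
    (hfp : ¬ range f ≤ p) : Function.Injective (p.mkQ ∘ₗ f) := by
  rw [← ker_eq_bot, ker_comp, Submodule.ker_mkQ]
  exact (hσ.2 _ (hp.comap hf)).resolve_right fun htop => hfp (range_le_iff_comap.2 htop)

theorem RepIrreducible.surjective_of_injective [Nontrivial W'] (hτ : RepIrreducible τ)
    {f : W' →ₗ[ℂ] W} (hf : σ.IsIntertwiningMap τ f) (hf_inj : Function.Injective f) :
    Function.Surjective f :=
  range_eq_top.1 <| (hτ.2 _ (repInvariant_range hf)).resolve_left fun hbot =>
    ne_zero_of_injective hf_inj (range_eq_bot.1 hbot)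

theorem repIso_of_range_le_sup (hσ : RepIrreducible σ) (hτ : RepIrreducible τ)
    {k : W' →ₗ[ℂ] V} (hk : σ.IsIntertwiningMap π k) {j : W →ₗ[ℂ] V}
    (hj : τ.IsIntertwiningMap π j) {p : Submodule ℂ V} (hp : RepInvariant π p)
    (hle : range k ≤ range j ⊔ p) (hkp : ¬ range k ≤ p) : RepIso σ τ := by
  have hjp : ¬ range j ≤ p := fun h => hkp (hle.trans (sup_le h le_rfl))
  have hq : π.IsIntertwiningMap (π.quotient p fun h v hv => hp h v hv) p.mkQ := ⟨fun _ _ => rfl⟩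
  have hrange : range (p.mkQ ∘ₗ k) ≤ range (p.mkQ ∘ₗ j) := by
    rw [range_comp, range_comp, ← sup_bot_eq (Submodule.map p.mkQ (range j)),
      ← Submodule.mkQ_map_self p, ← Submodule.map_sup]
    exact Submodule.map_mono hle
  obtain ⟨ψ, hψ, hjψ⟩ := exists_isIntertwiningMap_comp_eq (hq.comp hk) (hq.comp hj)
    (hτ.injective_mkQ_comp hj hp hjp) hrange
  have hψ_inj : Function.Injective ψ := by
    have hk_inj := hσ.injective_mkQ_comp hk hp hkp
    rw [← hjψ, coe_comp] at hk_inj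
    exact hk_inj.of_comp
  have := hσ.1
  exact ⟨.ofBijective ψ ⟨hψ_inj, hτ.surjective_of_injective hψ hψ_inj⟩, hψ.isIntertwining⟩

theorem RepIrreducible.iSup_range_comp_eq_top (hπ : RepIrreducible π) {j : W →ₗ[ℂ] V}
    (hj0 : j ≠ 0) : ⨆ g : G, range (π g⁻¹ ∘ₗ j) = ⊤ := by
  have hinv : RepInvariant π (⨆ g : G, range (π g⁻¹ ∘ₗ j)) := by
    refine repInvariant_iSup_of_forall_exists fun x g => ⟨g * x⁻¹, ?_⟩
    rintro _ ⟨w, rfl⟩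
    exact ⟨w, by simp [← Module.End.mul_apply, ← map_mul]⟩
  refine (hπ.2 _ hinv).resolve_left fun hbot => hj0 ?_
  have h1 : range (π 1⁻¹ ∘ₗ j) ≤ ⊥ := hbot ▸ le_iSup (fun g : G => range (π g⁻¹ ∘ₗ j)) 1
  simpa [Module.End.one_eq_id, range_eq_bot] using h1

variable {ι : Type*} {τ : ι → Representation ℂ G W} {j : ι → W →ₗ[ℂ] V}

theorem exists_repIso_of_range_le_biSup (hσ : RepIrreducible σ) (hτ : ∀ i, RepIrreducible (τ i))
    {k : W' →ₗ[ℂ] V} (hk : σ.IsIntertwiningMap π k) (hk0 : k ≠ 0)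
    (hj : ∀ i, (τ i).IsIntertwiningMap π (j i)) (s : Finset ι)
    (hle : range k ≤ ⨆ i ∈ s, range (j i)) : ∃ i ∈ s, RepIso σ (τ i) := by
  classical
  induction s using Finset.induction with
  | empty =>
    simp only [Finset.notMem_empty, iSup_false, iSup_bot, le_bot_iff, range_eq_bot] at hle
    exact absurd hle hk0
  | insert i s _ ih =>
    rw [Finset.iSup_insert] at hle
    by_cases hks : range k ≤ ⨆ i ∈ s, range (j i)
    · obtain ⟨i', hi', e⟩ := ih hks
      exact ⟨i', Finset.mem_insert_of_mem hi', e⟩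
    · refine ⟨i, Finset.mem_insert_self i s, repIso_of_range_le_sup hσ (hτ i) hk (hj i) ?_ hle hks⟩
      exact .iSup fun i => .iSup fun _ => repInvariant_range (hj i)

theorem exists_repIso_of_range_le_iSup (hσ : RepIrreducible σ) (hτ : ∀ i, RepIrreducible (τ i))
    {k : W' →ₗ[ℂ] V} (hk : σ.IsIntertwiningMap π k) (hk0 : k ≠ 0)
    (hj : ∀ i, (τ i).IsIntertwiningMap π (j i)) (hle : range k ≤ ⨆ i, range (j i)) :
    ∃ i, RepIso σ (τ i) := by
  obtain ⟨w, hw⟩ : ∃ w, k w ≠ 0 := by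
    by_contra! h
    exact hk0 (LinearMap.ext h)
  obtain ⟨s, hs⟩ := Submodule.mem_iSup_iff_exists_finset.1 (hle ⟨w, rfl⟩)
  have hs_inv : RepInvariant π (⨆ i ∈ s, range (j i)) :=
    .iSup fun i => .iSup fun _ => repInvariant_range (hj i)
  have hks := hσ.range_le_of_mem hk hs_inv (ne_of_apply_ne k (by rwa [map_zero])) hs
  obtain ⟨i, -, e⟩ := exists_repIso_of_range_le_biSup hσ hτ hk hk0 hj s hks
  exact ⟨i, e⟩

end

section

variable {G V W : Type*} [Group G] [AddCommGroup V] [Module ℂ V] [AddCommGroup W] [Module ℂ W]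
  {H : Subgroup G} [H.Normal] {π : Representation ℂ G V} {ρ : Representation ℂ H W}
  {j : W →ₗ[ℂ] V}

theorem conjHom_surjective (g : G) : Function.Surjective (conjHom H g) := fun h =>
  ⟨conjHom H g⁻¹ h, by ext; simp [conjHom, mul_assoc]⟩

theorem RepIrreducible.repConj (hρ : RepIrreducible ρ) (g : G) : RepIrreducible (RepConj ρ g) :=
  hρ.comp_of_surjective (conjHom_surjective g)

theorem Representation.IsIntertwiningMap.repConj (hj : ρ.IsIntertwiningMap (RepRes H π) j)
    (g : G) :
    (RepConj ρ g).IsIntertwiningMap (RepRes H π) (π g⁻¹ ∘ₗ j) := by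
  refine ⟨fun h w => ?_⟩
  change π g⁻¹ (j (ρ (conjHom H g h) w)) = π h (π g⁻¹ (j w))
  rw [hj.isIntertwining]
  change π g⁻¹ (π (g * h * g⁻¹) (j w)) = π h (π g⁻¹ (j w))
  simp only [← Module.End.mul_apply, ← map_mul]
  group

end

theorem statement2_general {G : Type} [Group G] (H : Subgroup G) [H.Normal]
    {V : Type} [AddCommGroup V] [Module ℂ V]
    (π : Representation ℂ G V) (hπ : RepIrreducible π)
    {W : Type} [AddCommGroup W] [Module ℂ W]
    (ρ : Representation ℂ ↥H W) (hρ : RepIrreducible ρ)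
    (hcont : RepContains (RepRes H π) ρ) :
    (∀ (W' : ModuleCat ℂ) (σ : Representation ℂ ↥H W'),
        RepIrreducible σ → RepContains (RepRes H π) σ → ∃ g : G, RepIso σ (RepConj ρ g)) ∧
    (∀ g : G, RepContains (RepRes H π) (RepConj ρ g)) := by
  obtain ⟨j, hj_inj, hj⟩ := hcont
  replace hj : ρ.IsIntertwiningMap (RepRes H π) j := ⟨hj⟩
  have hj0 : j ≠ 0 := by
    have := hρ.1
    exact ne_zero_of_injective hj_inj
  refine ⟨fun W' σ hσ ⟨k, hk_inj, hk⟩ => ?_, fun g =>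
    ⟨π g⁻¹ ∘ₗ j, (π.apply_bijective g⁻¹).1.comp hj_inj, (hj.repConj g).isIntertwining⟩⟩
  have hk0 : k ≠ 0 := by
    have := hσ.1
    exact ne_zero_of_injective hk_inj
  refine exists_repIso_of_range_le_iSup hσ hρ.repConj ⟨hk⟩ hk0 hj.repConj ?_
  rw [hπ.iSup_range_comp_eq_top hj0]
  exact le_top

/-- If `H ⊴ G` has finite index, `π` is an irreducible representation of `G` and `ρ`
an irreducible subrepresentation of `Res_H π`, then the irreducible constituents of
`Res_H π` are exactly the `G`-conjugates `ρ^g` of `ρ`, up to isomorphism. -/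
theorem statement2 {G : Type} [Group G] (H : Subgroup G) [H.Normal]
    (hfin : Finite (G ⧸ H)) {V : Type} [AddCommGroup V] [Module ℂ V]
    (π : Representation ℂ G V) (hπ : RepIrreducible π)
    {W : Type} [AddCommGroup W] [Module ℂ W]
    (ρ : Representation ℂ ↥H W) (hρ : RepIrreducible ρ)
    (hcont : RepContains (RepRes H π) ρ) :
    (∀ (W' : ModuleCat ℂ) (σ : Representation ℂ ↥H W'),
        RepIrreducible σ → RepContains (RepRes H π) σ → ∃ g : G, RepIso σ (RepConj ρ g)) ∧
    (∀ g : G, RepContains (RepRes H π) (RepConj ρ g)) :=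
  statement2_general H π hπ ρ hρ hcont
end

section
/- Let G be a group and H a normal subgroup with G/H cyclic of prime order p. Let ρ be an irreducible representation of H satisfying Schur's lemma, with ρ^g ≅ ρ for a generator g of G/H. Then ρ extends to an irreducible representation π of G, and Ind^G_H ρ ≅ ⊕_{i=1}^{p} (π ⊗ ω_i), where ω_1,…,ω_p are the p distinct characters of G/H, and the representations π ⊗ ω_i are pairwise non-isomorphic. -/
/-!
Since `ρ^g ≅ ρ`, some invertible `U` satisfies `U ρ(h) U⁻¹ = ρ(g h g⁻¹)`. Then `ρ(g^p)⁻¹ U^p`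
commutes with `ρ`, so it is a scalar `c` by Schur's lemma; rescaling `U` by a `p`-th root of
`c⁻¹` gives `T` with `T^p = ρ(g^p)`, and `π(g^k h) = T^k ρ(h)` is a well-defined extension of `ρ`
to `G = ⋃ₖ g^k H`.

The map `v ↦ (y ↦ π(y⁻¹) ∑ᵢ ωᵢ(y⁻¹) vᵢ)` intertwines `⨁ᵢ π ⊗ ωᵢ` with `Ind ρ`. It is injective
by Dedekind's independence of characters, and surjective because for `f ∈ Ind ρ` the function
`y ↦ π(y) f(y)` lives on `G/H`, where the `p = |G/H|` distinct characters span all functions.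
An isomorphism `π ⊗ ω ≅ π ⊗ ω'` commutes with `ρ`, hence is a nonzero scalar, which forces
`ω = ω'`.
-/

section Apply

variable {G W : Type*} [Group G] [AddCommGroup W] [Module ℂ W]

@[simp]
theorem coe_conjHom {H : Subgroup G} [H.Normal] (g : G) (h : H) :
    (conjHom H g h : G) = g * h * g⁻¹ := rfl

@[simp]
theorem twistRep_apply (π : Representation ℂ G W) (ω : G →* ℂˣ) (x : G) (v : W) :
    TwistRep π ω x v = (ω x : ℂ) • π x v := rfl

@[simp]
theorem piRep_apply {ι : Type*} (σ : ι → Representation ℂ G W) (x : G) (v : ι → W) (i : ι) :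
    PiRep σ x v i = σ i x (v i) := rfl

@[simp]
theorem coe_indRep_apply (H : Subgroup G) (ρ : Representation ℂ H W) (x : G)
    (f : IndSpace H ρ) (y : G) : (IndRep H ρ x f : G → W) y = (f : G → W) (x⁻¹ * y) := rfl

theorem mem_indSpace_iff {H : Subgroup G} {ρ : Representation ℂ H W} {f : G → W} :
    f ∈ IndSpace H ρ ↔ ∀ (y : G) (h : H), f (y * h) = ρ h⁻¹ (f y) := Iff.rfl

end Apply

theorem Function.Semiconj.perm_zpow {X Y : Type*} {f : X → Y} {α : Equiv.Perm X}
    {β : Equiv.Perm Y} (h : Function.Semiconj f α β) (k : ℤ) :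
    Function.Semiconj f ⇑(α ^ k) ⇑(β ^ k) := by
  have hpow (n : ℕ) : Function.Semiconj f ⇑(α ^ n) ⇑(β ^ n) := by
    simpa only [Equiv.Perm.coe_pow] using h.iterate_right n
  cases k with
  | ofNat n => exact hpow n
  | negSucc n =>
    rw [zpow_negSucc, zpow_negSucc]
    exact (hpow (n + 1)).inverses_right (Equiv.apply_symm_apply _) (Equiv.symm_apply_apply _)

section Extension

variable {G M : Type*} [Group G] [Group M] {H : Subgroup G}

theorem zpow_mul_eq_zpow_mul (R : H →* M) {g : G} {T : M}
    (hTpow : ∀ (k : ℤ) (h : H), g ^ k = h → T ^ k = R h) {a b : ℤ} {h h' : H}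
    (he : g ^ a * h = g ^ b * h') : T ^ a * R h = T ^ b * R h' := by
  have hk : g ^ (-b + a) = ((h' * h⁻¹ : H) : G) := by
    rw [zpow_add, zpow_neg, Subgroup.coe_mul, Subgroup.coe_inv, inv_mul_eq_iff_eq_mul,
      ← mul_assoc, ← he, mul_inv_cancel_right]
  calc T ^ a * R h = T ^ b * T ^ (-b + a) * R h := by group
    _ = T ^ b * R h' := by rw [hTpow _ _ hk, map_mul, map_inv]; group

variable [H.Normal]

theorem conj_zpow_of_conj (R : H →* M) {g : G} {T : M}
    (hT : ∀ h, T * R h * T⁻¹ = R (conjHom H g h)) (k : ℤ) (h : H) :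
    T ^ k * R h * (T ^ k)⁻¹ = R (conjHom H (g ^ k) h) := by
  have hsemi : Function.Semiconj R (MulAut.toPerm H (MulAut.conjNormal g))
      (MulAut.toPerm M (MulAut.conj T)) := fun h => (hT h).symm
  have := (hsemi.perm_zpow k h).symm
  rwa [← map_zpow, ← map_zpow, ← map_zpow, ← map_zpow] at this

theorem exists_monoidHom_extend (R : H →* M) {g : G}
    (hgen : ∀ x : G ⧸ H, x ∈ Subgroup.zpowers (g : G ⧸ H)) {T : M}
    (hT : ∀ h, T * R h * T⁻¹ = R (conjHom H g h))
    (hTpow : ∀ (k : ℤ) (h : H), g ^ k = h → T ^ k = R h) :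
    ∃ F : G →* M, ∀ h : H, F h = R h := by
  have hdecomp (x : G) : ∃ (k : ℤ) (h : H), x = g ^ k * h := by
    obtain ⟨k, hk⟩ := Subgroup.mem_zpowers_iff.mp (hgen x)
    rw [← QuotientGroup.mk_zpow, QuotientGroup.eq] at hk
    exact ⟨k, ⟨_, hk⟩, by simp⟩
  choose k hpart hx using hdecomp
  have hF (a : ℤ) (h : H) : T ^ k (g ^ a * h) * R (hpart (g ^ a * h)) = T ^ a * R h :=
    zpow_mul_eq_zpow_mul R hTpow (hx _).symm
  refine ⟨MonoidHom.mk' (fun x => T ^ k x * R (hpart x)) fun x y => ?_, fun h => ?_⟩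
  · have hxy : x * y = g ^ (k x + k y) * (conjHom H (g ^ (-k y)) (hpart x) * hpart y : H) := by
      conv_lhs => rw [hx x, hx y]
      simp only [Subgroup.coe_mul, coe_conjHom]
      group
    rw [hxy, hF, map_mul, ← conj_zpow_of_conj R hT]
    group
  · simpa using hF 0 h

theorem zpow_eq_of_pow_eq (R : H →* M) {g : G} {n : ℕ} (hn : orderOf (g : G ⧸ H) = n)
    (hgn : g ^ n ∈ H) {T : M} (hTn : T ^ n = R ⟨g ^ n, hgn⟩) (k : ℤ) (h : H) (hk : g ^ k = h) :
    T ^ k = R h := by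
  obtain ⟨m, rfl⟩ : (n : ℤ) ∣ k := by
    rw [← hn, orderOf_dvd_iff_zpow_eq_one, ← QuotientGroup.mk_zpow, QuotientGroup.eq_one_iff, hk]
    exact h.2
  have hm : h = ⟨g ^ n, hgn⟩ ^ m := Subtype.ext (by simp [← hk, zpow_mul])
  rw [hm, map_zpow, ← hTn, zpow_mul, zpow_natCast]

end Extension

section Schur

def scalarUnits (W : Type*) [AddCommGroup W] [Module ℂ W] : ℂˣ →* (Module.End ℂ W)ˣ :=
  Units.map (algebraMap ℂ (Module.End ℂ W)).toMonoidHom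

variable {W : Type*} [AddCommGroup W] [Module ℂ W]

theorem scalarUnits_commute (c : ℂˣ) (U : (Module.End ℂ W)ˣ) : Commute (scalarUnits W c) U :=
  Units.ext (Algebra.commutes _ _)

theorem RepSchur.exists_eq_scalarUnits {H : Type*} [Group H] [Nontrivial W]
    {ρ : Representation ℂ H W} (hschur : RepSchur ρ) (V : (Module.End ℂ W)ˣ)
    (hV : ∀ h, Commute V (ρ.asGroupHom h)) : ∃ c : ℂˣ, V = scalarUnits W c := by
  obtain ⟨c, hc⟩ := hschur V fun h w => by
    simpa [Representation.asGroupHom_apply] using LinearMap.congr_fun (congrArg Units.val (hV h)) w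
  have hc0 : c ≠ 0 := by
    rintro rfl
    rw [zero_smul] at hc
    exact V.ne_zero hc
  refine ⟨Units.mk0 c hc0, Units.ext ?_⟩
  simp [scalarUnits, hc, Algebra.algebraMap_eq_smul_one, Module.End.one_eq_id]

variable {G : Type*} [Group G] {H : Subgroup G} [H.Normal]

theorem RepIso.exists_units_conj {ρ : Representation ℂ H W} {g : G}
    (hconj : RepIso (RepConj ρ g) ρ) :
    ∃ U : (Module.End ℂ W)ˣ, ∀ h, U * ρ.asGroupHom h * U⁻¹ = ρ.asGroupHom (conjHom H g h) := by
  obtain ⟨e, he⟩ := hconj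
  refine ⟨⟨e.symm.toLinearMap, e.toLinearMap, by ext; simp, by ext; simp⟩, fun h => ?_⟩
  rw [mul_inv_eq_iff_eq_mul]
  ext w
  simpa [RepConj, Representation.asGroupHom_apply] using
    e.symm_apply_eq.mpr (he h (e.symm w)).symm

theorem RepSchur.exists_units_conj_and_pow_eq [Nontrivial W] {ρ : Representation ℂ H W}
    (hschur : RepSchur ρ) {g : G} (hconj : RepIso (RepConj ρ g) ρ) {n : ℕ} (hn : n ≠ 0)
    (hgn : g ^ n ∈ H) :
    ∃ T : (Module.End ℂ W)ˣ, (∀ h, T * ρ.asGroupHom h * T⁻¹ = ρ.asGroupHom (conjHom H g h)) ∧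
      T ^ n = ρ.asGroupHom ⟨g ^ n, hgn⟩ := by
  obtain ⟨U, hU⟩ := hconj.exists_units_conj
  have hUn (h : H) : U ^ n * ρ.asGroupHom h =
      ρ.asGroupHom ⟨g ^ n, hgn⟩ * ρ.asGroupHom h * (ρ.asGroupHom ⟨g ^ n, hgn⟩)⁻¹ * U ^ n := by
    rw [← mul_inv_eq_iff_eq_mul, ← zpow_natCast, conj_zpow_of_conj _ hU, ← map_inv, ← map_mul,
      ← map_mul]
    congr 1
    ext
    simp
  obtain ⟨c, hc⟩ := hschur.exists_eq_scalarUnits ((ρ.asGroupHom ⟨g ^ n, hgn⟩)⁻¹ * U ^ n)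
    fun h => by rw [commute_iff_eq, mul_assoc, hUn]; group
  obtain ⟨z, hz⟩ := IsAlgClosed.exists_pow_nat_eq ((c⁻¹ : ℂˣ) : ℂ) (Nat.pos_of_ne_zero hn)
  set s := scalarUnits W (Units.mk0 z (ne_zero_pow hn (hz ▸ Units.ne_zero _)))
  refine ⟨s * U, fun h => ?_, ?_⟩
  · calc s * U * ρ.asGroupHom h * (s * U)⁻¹ = s * (U * ρ.asGroupHom h * U⁻¹) * s⁻¹ := by group
      _ = ρ.asGroupHom (conjHom H g h) := by
        rw [hU, (scalarUnits_commute _ _).eq, mul_inv_cancel_right]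
  · have hs : s ^ n = scalarUnits W c⁻¹ := by
      rw [← map_pow]
      congr 1
      ext
      simp [hz]
    rw [(scalarUnits_commute _ U).mul_pow, hs, inv_mul_eq_iff_eq_mul.mp hc, ← mul_assoc,
      (scalarUnits_commute _ _).eq, mul_assoc, ← map_mul, inv_mul_cancel, map_one, mul_one]

end Schur

section Functions

theorem exists_eq_sum_smul_of_span_eq_top {K X ι W : Type*} [CommSemiring K] [AddCommMonoid W]
    [Module K W] [Fintype X] [Fintype ι] {χ : ι → X → K}
    (hχ : Submodule.span K (Set.range χ) = ⊤) (F : X → W) :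
    ∃ v : ι → W, ∀ x, F x = ∑ i, χ i x • v i := by
  classical
  have hδ (q : X) : ∃ a : ι → K, ∑ i, a i • χ i = Pi.single q 1 :=
    (Submodule.mem_span_range_iff_exists_fun K).mp (hχ ▸ Submodule.mem_top)
  choose a ha using hδ
  refine ⟨fun i => ∑ q, a q i • F q, fun x => ?_⟩
  calc F x = ∑ q, (Pi.single q 1 : X → K) x • F q := by simp [Pi.single_apply]
    _ = ∑ i, χ i x • ∑ q, a q i • F q := by
      simp only [← ha, Finset.sum_apply, Pi.smul_apply, smul_eq_mul, Finset.sum_smul,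
        Finset.smul_sum, smul_smul, mul_comm]
      exact Finset.sum_comm

theorem eq_zero_of_forall_sum_smul_eq_zero {K X ι W : Type*} [Field K] [AddCommGroup W]
    [Module K W] [Fintype ι] {χ : ι → X → K} (hχ : LinearIndependent K χ) {v : ι → W}
    (hv : ∀ x, ∑ i, χ i x • v i = 0) : v = 0 := by
  funext i
  rw [Pi.zero_apply, ← Module.forall_dual_apply_eq_zero_iff K]
  intro φ
  have hsum : ∑ j, φ (v j) • χ j = 0 := funext fun x => by
    simpa [mul_comm] using congrArg φ (hv x)
  exact Fintype.linearIndependent_iff.mp hχ _ hsum i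

theorem linearIndependent_coe_units_monoidHom {Q ι K : Type*} [Monoid Q] [Field K]
    {ψ : ι → Q →* Kˣ} (hψ : Function.Injective ψ) :
    LinearIndependent K fun i q => (ψ i q : K) :=
  (linearIndependent_monoidHom Q K).comp (fun i => (Units.coeHom K).comp (ψ i))
    fun _ _ hij => hψ (MonoidHom.ext fun q => Units.ext (DFunLike.congr_fun hij q))

end Functions

section Induced

variable {G W ι : Type*} [Group G] [AddCommGroup W] [Module ℂ W] [Fintype ι] (H : Subgroup G)
  (π : Representation ℂ G W) {ω : ι → G →* ℂˣ}

def indMap (hω : ∀ i, ∀ h ∈ H, ω i h = 1) : (ι → W) →ₗ[ℂ] IndSpace H (RepRes H π) :=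
  LinearMap.codRestrict _
    (LinearMap.pi fun y => π y⁻¹ ∘ₗ ∑ i, (ω i y⁻¹ : ℂ) • LinearMap.proj i) fun _ =>
      mem_indSpace_iff.mpr fun _ h => by simp [RepRes, mul_inv_rev, hω _ _ h.2]

variable {H π}

@[simp]
theorem coe_indMap_apply (hω : ∀ i, ∀ h ∈ H, ω i h = 1) (v : ι → W) (y : G) :
    (indMap H π hω v : G → W) y = π y⁻¹ (∑ i, (ω i y⁻¹ : ℂ) • v i) := by
  simp [indMap]

theorem indMap_intertwines (hω : ∀ i, ∀ h ∈ H, ω i h = 1) (x : G) (v : ι → W) :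
    indMap H π hω (PiRep (fun i => TwistRep π (ω i)) x v) =
      IndRep H (RepRes H π) x (indMap H π hω v) := by
  ext y
  simp [map_sum, map_smul, smul_smul, mul_comm]

theorem indMap_injective (hω : ∀ i, ∀ h ∈ H, ω i h = 1) (hinj : Function.Injective ω) :
    Function.Injective (indMap H π hω) := by
  rw [← LinearMap.ker_eq_bot, LinearMap.ker_eq_bot']
  intro v hv
  refine eq_zero_of_forall_sum_smul_eq_zero (linearIndependent_coe_units_monoidHom hinj) fun y => ?_
  have := congrArg (fun f : IndSpace H (RepRes H π) => (f : G → W) y⁻¹) hv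
  simp only [coe_indMap_apply, inv_inv, ZeroMemClass.coe_zero, Pi.zero_apply] at this
  exact (map_eq_zero_iff _ (π.apply_bijective y).1).mp this

theorem indMap_surjective [H.Normal] [Finite (G ⧸ H)] (hω : ∀ i, ∀ h ∈ H, ω i h = 1)
    (hinj : Function.Injective ω) (hcard : Fintype.card ι = Nat.card (G ⧸ H)) :
    Function.Surjective (indMap H π hω) := by
  classical
  have : Fintype (G ⧸ H) := Fintype.ofFinite _
  let ωbar (i : ι) : G ⧸ H →* ℂˣ :=
    QuotientGroup.lift H (ω i) fun h hh => MonoidHom.mem_ker.mpr (hω i h hh)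
  have hbar : Function.Injective ωbar := fun i j hij =>
    hinj (MonoidHom.ext fun x => by simpa [ωbar] using DFunLike.congr_fun hij (x : G ⧸ H))
  have hlin : LinearIndependent ℂ fun i (q : G ⧸ H) => ((ωbar i)⁻¹ q : ℂ) :=
    linearIndependent_coe_units_monoidHom fun i j hij => hbar (inv_injective hij)
  have hspan := hlin.span_eq_top_of_card_eq_finrank'
    (by simp [Module.finrank_fintype_fun_eq_card, hcard, Nat.card_eq_fintype_card])
  intro f
  obtain ⟨v, hv⟩ := exists_eq_sum_smul_of_span_eq_top hspan fun q => π q.out ((f : G → W) q.out)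
  refine ⟨v, Subtype.ext (funext fun y => ?_)⟩
  obtain ⟨h, hh⟩ := QuotientGroup.mk_out_eq_mul H y
  have := hv (y : G ⧸ H)
  rw [hh, f.2 y h] at this
  simp only [map_mul, RepRes, MonoidHom.coe_comp, Subgroup.coe_subtype, Function.comp_apply,
    InvMemClass.coe_inv, Module.End.mul_apply, Representation.self_inv_apply, MonoidHom.inv_apply,
    QuotientGroup.lift_mk, Units.val_inv_eq_inv_val, ωbar] at this
  rw [coe_indMap_apply, π.inv_apply_eq_iff, this]
  simp

theorem repIso_indRep_piRep_twistRep [H.Normal] [Finite (G ⧸ H)]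
    (hω : ∀ i, ∀ h ∈ H, ω i h = 1) (hinj : Function.Injective ω)
    (hcard : Fintype.card ι = Nat.card (G ⧸ H)) :
    RepIso (IndRep H (RepRes H π)) (PiRep fun i => TwistRep π (ω i)) := by
  let e := LinearEquiv.ofBijective (indMap H π hω)
    ⟨indMap_injective hω hinj, indMap_surjective hω hinj hcard⟩
  refine ⟨e.symm, fun x f => ?_⟩
  rw [e.symm_apply_eq]
  change _ = indMap H π hω _
  rw [indMap_intertwines]
  exact congrArg _ (e.apply_symm_apply f).symm

end Induced

section Twist

variable {G W : Type*} [Group G] [AddCommGroup W] [Module ℂ W] {H : Subgroup G}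
  {π : Representation ℂ G W}

theorem RepIrreducible.of_repRes (hirr : RepIrreducible (RepRes H π)) : RepIrreducible π :=
  ⟨hirr.1, fun q hq => hirr.2 q fun h => hq h⟩

theorem eq_of_repIso_twistRep [Nontrivial W] (hschur : RepSchur (RepRes H π)) {ω ω' : G →* ℂˣ}
    (hω : ∀ h ∈ H, ω h = 1) (hω' : ∀ h ∈ H, ω' h = 1)
    (hiso : RepIso (TwistRep π ω) (TwistRep π ω')) : ω = ω' := by
  obtain ⟨e, he⟩ := hiso
  obtain ⟨c, hc⟩ := hschur e.toLinearMap fun h w => by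
    simpa [RepRes, hω h h.2, hω' h h.2] using he h w
  have he_apply (w : W) : e w = c • w := LinearMap.congr_fun hc w
  obtain ⟨w, hw⟩ := exists_ne (0 : W)
  have hc0 : c ≠ 0 := by
    rintro rfl
    exact hw (e.injective (by simp [he_apply]))
  ext x
  have hx := he x w
  simp only [twistRep_apply, map_smul, he_apply, smul_smul] at hx
  have := smul_left_injective ℂ ((map_ne_zero_iff _ (π.apply_bijective x).1).mpr hw) hx
  exact mul_left_cancel₀ hc0 (by simpa [mul_comm] using this)

end Twist

/-- If `G/H` is cyclic of prime order `p` generated by the image of `g`, and `ρ` is an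
irreducible representation of `H` satisfying Schur's lemma with `ρ^g ≅ ρ`, then `ρ` extends
to an irreducible representation `π` of `G` and
`Ind_H^G ρ ≅ ⊕_{i=1}^p (π ⊗ ω_i)` where `ω_1, …, ω_p` are the `p` distinct characters of
`G/H`, the twists `π ⊗ ω_i` being pairwise non-isomorphic. -/
theorem statement3 {G : Type} [Group G] (H : Subgroup G) [H.Normal]
    (p : ℕ) (hp : p.Prime) (hcard : Nat.card (G ⧸ H) = p)
    (g : G) (hgen : ∀ x : G ⧸ H, x ∈ Subgroup.zpowers ((g : G ⧸ H)))
    {W : Type} [AddCommGroup W] [Module ℂ W]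
    (ρ : Representation ℂ ↥H W) (hρ : RepIrreducible ρ) (hschur : RepSchur ρ)
    (hconj : RepIso (RepConj ρ g) ρ) :
    ∃ π : Representation ℂ G W,
      π.comp H.subtype = ρ ∧ RepIrreducible π ∧
      ∀ ω : Fin p → (G →* ℂˣ),
        (∀ i, ∀ h ∈ H, ω i h = 1) → Function.Injective ω →
          RepIso (IndRep H ρ) (PiRep fun i => TwistRep π (ω i)) ∧
          ∀ i j, i ≠ j → ¬ RepIso (TwistRep π (ω i)) (TwistRep π (ω j)) := by
  have : Nontrivial W := hρ.1
  have : Finite (G ⧸ H) := Nat.finite_of_card_ne_zero (hcard ▸ hp.ne_zero)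
  have horder : orderOf (g : G ⧸ H) = p :=
    (orderOf_eq_card_of_forall_mem_zpowers hgen).trans hcard
  have hgp : g ^ p ∈ H := by
    rw [← QuotientGroup.eq_one_iff, QuotientGroup.mk_pow, ← horder, pow_orderOf_eq_one]
  obtain ⟨T, hT, hTp⟩ := hschur.exists_units_conj_and_pow_eq hconj hp.ne_zero hgp
  obtain ⟨F, hF⟩ :=
    exists_monoidHom_extend ρ.asGroupHom hgen hT (zpow_eq_of_pow_eq _ horder hgp hTp)
  let π : Representation ℂ G W := (Units.coeHom _).comp F
  have hres : RepRes H π = ρ := by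
    ext h : 1
    simp [π, RepRes, hF, Representation.asGroupHom_apply]
  refine ⟨π, hres, RepIrreducible.of_repRes (hres ▸ hρ), fun ω hω hinj => ⟨?_, ?_⟩⟩
  · rw [← hres]
    exact repIso_indRep_piRep_twistRep hω hinj (by simp [hcard])
  · exact fun i j hij hiso => hij (hinj (eq_of_repIso_twistRep (hres ▸ hschur) (hω i) (hω j) hiso))
end

section
/- Let G be a finite group and H a normal subgroup with G/H abelian. Let π be an irreducible complex representation of G and ρ an irreducible constituent of Res^G_H π. Then any two irreducible representations π₁, π₂ of G both containing ρ in their restriction to H differ by a twist: π₂ ≅ π₁ ⊗ ω for some character ω of G/H. -/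
/-!
The group `G` acts on the space `Hom_H(π₁, π₂)` of `H`-intertwiners by `f ↦ π₂ g ∘ f ∘ π₁ g⁻¹`.
This space is nonzero, since by Maschke's theorem both restrictions contain `ρ` as a direct
summand. The action factors through the abelian group `G/H`, so it consists of commuting operators
on a finite-dimensional complex space and has a common eigenvector `f`, whose eigenvalues form a
character `ω` of `G/H`. Then `f` is a nonzero intertwiner from `π₁ ⊗ ω` to `π₂`, hence an
isomorphism by Schur's lemma.
-/

namespace Module.End

theorem exists_common_eigenvector {ι K V : Type*} [Field K] [IsAlgClosed K] [AddCommGroup V]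
    [Module K V] [FiniteDimensional K V] [Nontrivial V] (f : ι → End K V)
    (hf : ∀ i j, Commute (f i) (f j)) : ∃ v ≠ 0, ∀ i, ∃ μ : K, f i v = μ • v := by
  let S : Set (Submodule K V) := {N | N ≠ ⊥ ∧ ∀ i, ∀ x ∈ N, f i x ∈ N}
  have hS : (⊤ : Submodule K V) ∈ S := ⟨top_ne_bot, fun _ _ _ => Submodule.mem_top⟩
  obtain ⟨N, ⟨hN, hNf⟩, hmin⟩ := wellFounded_lt.has_min S ⟨⊤, hS⟩
  -- An eigenspace of `f i` meets the minimal `N` in a smaller member of `S`, so it contains `N`.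
  have hscalar : ∀ i, ∃ μ : K, N ≤ (f i).eigenspace μ := by
    intro i
    have : Nontrivial N := Submodule.nontrivial_iff_ne_bot.2 hN
    obtain ⟨μ, hμ⟩ := exists_eigenvalue ((f i).restrict (hNf i))
    obtain ⟨x, hx⟩ := hμ.exists_hasEigenvector
    have hE : N ⊓ (f i).eigenspace μ ∈ S := by
      refine ⟨?_, fun j y hy => ⟨hNf j y hy.1, mapsTo_genEigenspace_of_comm (hf i j) μ 1 hy.2⟩⟩
      refine Submodule.ne_bot_iff _ |>.2 ⟨x, ⟨x.2, ?_⟩, fun h => hx.2 (Subtype.ext h)⟩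
      exact mem_eigenspace_iff.2 (congrArg Subtype.val hx.apply_eq_smul)
    refine ⟨μ, inf_eq_left.1 ?_⟩
    by_contra hne
    exact hmin _ hE (lt_of_le_of_ne inf_le_left hne)
  obtain ⟨v, hvN, hv⟩ := Submodule.exists_mem_ne_zero_of_ne_bot hN
  exact ⟨v, hv, fun i => (hscalar i).imp fun μ h => mem_eigenspace_iff.1 (h hvN)⟩

end Module.End

section

variable {G : Type*} [Group G] {V : Type*} [AddCommGroup V] [Module ℂ V]

theorem RepIrreducible.finiteDimensional [Finite G] {π : Representation ℂ G V}
    (hπ : RepIrreducible π) : FiniteDimensional ℂ V := by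
  have := hπ.1
  obtain ⟨v, hv0⟩ := exists_ne (0 : V)
  let p := Submodule.span ℂ (Set.range fun g => π g v)
  have hp : RepInvariant π p := by
    intro g w hw
    refine Submodule.span_induction ?_ (by simp) (fun _ _ _ _ => by simp_all [add_mem])
      (fun _ _ _ => by simp_all [Submodule.smul_mem]) hw
    rintro _ ⟨g', rfl⟩
    exact Submodule.subset_span ⟨g * g', by simp⟩
  have hv : v ∈ p := Submodule.subset_span ⟨1, by simp⟩
  have htop : p = ⊤ := (hπ.2 p hp).resolve_left fun h => hv0 (by simpa [h] using hv)
  exact ⟨htop ▸ Submodule.fg_span (Set.finite_range _)⟩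

theorem RepIrreducible.isIrreducible {π : Representation ℂ G V} (hπ : RepIrreducible π) :
    π.IsIrreducible where
  exists_pair_ne :=
    have := hπ.1
    ⟨⊥, ⊤, fun h => bot_ne_top (α := Submodule ℂ V) (congrArg (·.toSubmodule) h)⟩
  eq_bot_or_eq_top s := (hπ.2 s.toSubmodule s.apply_mem_toSubmodule).imp
    (fun h => Subrepresentation.toSubmodule_injective h)
    (fun h => Subrepresentation.toSubmodule_injective h)

theorem RepIrreducible.twistRep {π : Representation ℂ G V} (hπ : RepIrreducible π)
    (ω : G →* ℂˣ) : RepIrreducible (TwistRep π ω) := by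
  refine ⟨hπ.1, fun p hp => hπ.2 p fun g v hv => ?_⟩
  have := p.smul_mem ((ω g)⁻¹ : ℂˣ) (hp g v hv)
  simpa [TwistRep] using this

end

namespace Representation

section Field

variable {k G V W : Type*} [Field k] [Group G] [AddCommGroup V] [Module k V] [AddCommGroup W]
  [Module k W] {ρ : Representation k G V} {σ : Representation k G W}

theorem IntertwiningMap.exists_leftInverse_of_injective [Finite G] [NeZero (Nat.card G : k)]
    (f : IntertwiningMap ρ σ) (hf : Function.Injective f) :
    ∃ p : IntertwiningMap σ ρ, ∀ v, p (f v) = v := by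
  obtain ⟨p, hp⟩ := MonoidAlgebra.exists_leftInverse_of_injective
    (equivLinearMapAsModule ρ σ f) (LinearMap.ker_eq_bot.2 hf)
  exact ⟨(equivLinearMapAsModule σ ρ).symm p, LinearMap.congr_fun hp⟩

theorem toInvariants_commute (ρ : Representation k G V) (S : Subgroup G) [S.Normal]
    (hS : ∀ a b : G, a * b * a⁻¹ * b⁻¹ ∈ S) (a b : G) :
    Commute (toInvariants ρ S a) (toInvariants ρ S b) := by
  have hcomm : toInvariants ρ S (a * b * a⁻¹ * b⁻¹) = 1 :=
    IsTrivial.out (ρ := (toInvariants ρ S).comp S.subtype) ⟨_, hS a b⟩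
  rw [Commute, SemiconjBy, ← map_mul, ← map_mul,
    show a * b = a * b * a⁻¹ * b⁻¹ * (b * a) by group, map_mul _ (a * b * a⁻¹ * b⁻¹), hcomm,
    one_mul]

theorem exists_monoidHom_of_forall_apply_eq_smul {v : V} (hv : v ≠ 0)
    (h : ∀ g, ∃ c : k, ρ g v = c • v) : ∃ ω : G →* kˣ, ∀ g, ρ g v = (ω g : k) • v := by
  choose c hc using h
  have hsmul_inj : ∀ a b : k, a • v = b • v → a = b := fun _ _ h => smul_left_injective k hv h
  have hc0 : ∀ g, c g ≠ 0 := fun g h0 => hv <| by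
    simpa [← hc, h0] using congrArg (ρ g⁻¹) (hc g)
  refine ⟨{ toFun g := Units.mk0 (c g) (hc0 g), map_one' := ?_, map_mul' a b := ?_ }, hc⟩
  · ext; exact hsmul_inj _ _ (by simp [← hc])
  · ext
    refine hsmul_inj _ _ ?_
    simp only [Units.val_mul, Units.val_mk0]
    rw [← hc, map_mul, Module.End.mul_apply, hc b, map_smul, hc a, smul_smul, mul_comm]

end Field

section Complex

variable {G : Type*} [Group G] {V W : Type*} [AddCommGroup V] [Module ℂ V] [AddCommGroup W]
  [Module ℂ W]

theorem Equiv.repIso {ρ : Representation ℂ G V} {σ : Representation ℂ G W} (e : Equiv ρ σ) :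
    RepIso ρ σ :=
  ⟨e.toLinearEquiv, e.toIntertwiningMap.isIntertwining⟩

theorem exists_intertwiningMap_ne_zero_of_repContains [Finite G] {U : Type*} [AddCommGroup U]
    [Module ℂ U] [Nontrivial U] {ρ : Representation ℂ G U} {σ₁ : Representation ℂ G V}
    {σ₂ : Representation ℂ G W} (h₁ : RepContains σ₁ ρ) (h₂ : RepContains σ₂ ρ) :
    ∃ f : IntertwiningMap σ₁ σ₂, f ≠ 0 := by
  obtain ⟨j₁, hj₁, hj₁ρ⟩ := h₁
  obtain ⟨j₂, hj₂, hj₂ρ⟩ := h₂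
  obtain ⟨p, hp⟩ := IntertwiningMap.exists_leftInverse_of_injective
    (j₁.intertwiningMap_of_isIntertwiningMap ρ σ₁ hj₁ρ) hj₁
  obtain ⟨u, hu⟩ := exists_ne (0 : U)
  refine ⟨(j₂.intertwiningMap_of_isIntertwiningMap ρ σ₂ hj₂ρ).comp p, fun h => hu (hj₂ ?_)⟩
  have := congrArg (· (j₁.intertwiningMap_of_isIntertwiningMap ρ σ₁ hj₁ρ u)) h
  rw [IntertwiningMap.comp_apply, hp] at this
  simpa using this

theorem isIntertwiningMap_twistRep_of_linHom_apply_eq_smul {π₁ : Representation ℂ G V}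
    {π₂ : Representation ℂ G W} {ω : G →* ℂˣ} {f : V →ₗ[ℂ] W}
    (hf : ∀ g, linHom π₁ π₂ g f = (ω g : ℂ) • f) : (TwistRep π₁ ω).IsIntertwiningMap π₂ f := by
  refine ⟨fun g v => ?_⟩
  have := LinearMap.congr_fun (hf g) (π₁ g v)
  simp only [linHom_apply, LinearMap.comp_apply, LinearMap.smul_apply] at this
  rw [← Module.End.mul_apply, ← map_mul, inv_mul_cancel, map_one, Module.End.one_apply] at this
  change f ((ω g : ℂ) • π₁ g v) = _
  rw [map_smul, this]

end Complex

end Representation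

/-- For a finite group `G`, `H ⊴ G` with abelian quotient and `ρ` an irreducible
representation of `H`, any two irreducible representations of `G` containing `ρ` in their
restriction to `H` differ by a twist by a character of `G/H`. -/
theorem statement7 {G : Type} [Group G] [Finite G] (H : Subgroup G) [H.Normal]
    (hab : ∀ a b : G, a * b * a⁻¹ * b⁻¹ ∈ H)
    {W : Type} [AddCommGroup W] [Module ℂ W]
    (ρ : Representation ℂ ↥H W) (hρ : RepIrreducible ρ)
    {V₁ : Type} [AddCommGroup V₁] [Module ℂ V₁]
    (π₁ : Representation ℂ G V₁) (hπ₁ : RepIrreducible π₁)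
    (h₁ : RepContains (RepRes H π₁) ρ)
    {V₂ : Type} [AddCommGroup V₂] [Module ℂ V₂]
    (π₂ : Representation ℂ G V₂) (hπ₂ : RepIrreducible π₂)
    (h₂ : RepContains (RepRes H π₂) ρ) :
    ∃ ω : G →* ℂˣ, (∀ h ∈ H, ω h = 1) ∧ RepIso π₂ (TwistRep π₁ ω) := by
  have := hρ.1
  have := hπ₁.finiteDimensional
  have := hπ₂.finiteDimensional
  obtain ⟨f₀, hf₀⟩ := Representation.exists_intertwiningMap_ne_zero_of_repContains h₁ h₂
  let τ := Representation.toInvariants (π₁.linHom π₂) H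
  have : Nontrivial (Representation.invariants ((π₁.linHom π₂).comp H.subtype)) :=
    ⟨⟨(Representation.invariantsEquivIntertwiningMap _ _).symm f₀, 0,
      (LinearEquiv.map_ne_zero_iff _).2 hf₀⟩⟩
  obtain ⟨F, hF0, hF⟩ :=
    Module.End.exists_common_eigenvector τ (Representation.toInvariants_commute _ H hab)
  obtain ⟨ω, hω⟩ := Representation.exists_monoidHom_of_forall_apply_eq_smul hF0 hF
  refine ⟨ω, fun h hh => Units.ext <| smul_left_injective ℂ hF0 ?_, ?_⟩
  · change (ω h : ℂ) • F = (1 : ℂ) • F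
    rw [one_smul, ← hω h]
    exact LinearMap.congr_fun (Representation.IsTrivial.out (ρ := τ.comp H.subtype) ⟨h, hh⟩) F
  · have hFω := Representation.isIntertwiningMap_twistRep_of_linHom_apply_eq_smul (f := F.1)
      fun g => congrArg Subtype.val (hω g)
    let Φ := F.1.intertwiningMap_of_isIntertwiningMap _ _ hFω.isIntertwining
    have hΦ : Φ ≠ 0 := fun h => hF0 (Subtype.ext congr(($h).toLinearMap))
    have := (hπ₁.twistRep ω).isIrreducible
    have := hπ₂.isIrreducible
    have hbij := (Representation.IsIrreducible.bijective_or_eq_zero Φ).resolve_right hΦ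
    exact (Φ.ofBijective hbij).symm.repIso
end

section
/- Let G be a group, H ⊴ G with G/H finite abelian, and suppose every irreducible representation of intermediate subgroups satisfies Schur's lemma. Let ρ be an irreducible representation of H and G¹ a maximal subgroup of G containing H to which ρ extends, with extension π¹. Then Ind^{G¹}_H ρ ≅ ⊕_{ω ∈ (G¹/H)^*} π¹ ⊗ ω. -/
/-! Because `ρ` extends to `π₁`, the induced representation is `Ind (Res π₁)`. The map
`f ↦ (g ↦ π₁ g (f g))` is constant on `H`-cosets and identifies `Ind (Res π₁)` with
`W`-valued functions on `G₁ ⧸ H`, on which `x` acts by `π₁ x` composed with translation by `x`.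
Since `G₁ ⧸ H` is finite abelian, the Fourier transform along its characters turns translation
by `x` into multiplication by `ω x`, which splits the representation into the twists `π₁ ⊗ ω`. -/

open Finset

namespace MonoidHom

variable {Q : Type*} [CommGroup Q] [Fintype Q]

theorem sum_units_apply_eq_ite (χ : Q →* ℂˣ) [Decidable (χ = 1)] :
    ∑ q, (χ q : ℂ) = if χ = 1 then (Fintype.card Q : ℂ) else 0 := by
  split_ifs with hχ
  · simp [hχ]
  · refine sum_hom_units_eq_zero ((Units.coeHom ℂ).comp χ) fun h => hχ ?_
    ext q
    simpa using DFunLike.congr_fun h q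

theorem sum_dual_units_apply_eq_ite [Fintype (Q →* ℂˣ)] (q : Q) [Decidable (q = 1)] :
    ∑ χ : Q →* ℂˣ, (χ q : ℂ) = if q = 1 then (Fintype.card Q : ℂ) else 0 := by
  have : NeZero (Monoid.exponent Q) := ⟨Monoid.exponent_ne_zero_of_finite⟩
  split_ifs with hq
  · obtain ⟨e⟩ := CommGroup.monoidHom_mulEquiv_of_hasEnoughRootsOfUnity Q ℂ
    simp [hq, Fintype.card_congr e.toEquiv]
  · obtain ⟨φ, hφ⟩ := CommGroup.exists_apply_ne_one_of_hasEnoughRootsOfUnity Q ℂ hq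
    refine sum_hom_units_eq_zero ((Units.coeHom ℂ).comp (MonoidHom.eval q)) fun h => hφ ?_
    simpa using DFunLike.congr_fun h φ

end MonoidHom

section Fourier

variable {Q : Type*} [CommGroup Q] [Fintype Q] [Fintype (Q →* ℂˣ)]
variable {W : Type*} [AddCommGroup W] [Module ℂ W]

variable (Q W) in
noncomputable def fourierEquiv : (Q → W) ≃ₗ[ℂ] ((Q →* ℂˣ) → W) where
  toFun F χ := ∑ q, (χ q : ℂ) • F q
  map_add' F F' := by ext χ; simp [smul_add, sum_add_distrib]
  map_smul' c F := by ext χ; simp [smul_sum, smul_comm c]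
  invFun v q := (Fintype.card Q : ℂ)⁻¹ • ∑ χ : Q →* ℂˣ, (χ q⁻¹ : ℂ) • v χ
  left_inv F := by
    classical
    have hcard : (Fintype.card Q : ℂ) ≠ 0 := Nat.cast_ne_zero.mpr Fintype.card_ne_zero
    ext q
    have key : ∑ χ : Q →* ℂˣ, (χ q⁻¹ : ℂ) • ∑ p, (χ p : ℂ) • F p =
        (Fintype.card Q : ℂ) • F q := by
      simp_rw [smul_sum, smul_smul, ← Units.val_mul, ← map_mul]
      rw [sum_comm]
      simp_rw [← sum_smul, MonoidHom.sum_dual_units_apply_eq_ite, inv_mul_eq_one, ite_smul,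
        zero_smul, sum_ite_eq, if_pos (mem_univ q)]
    change (Fintype.card Q : ℂ)⁻¹ • _ = _
    rw [key, smul_smul, inv_mul_cancel₀ hcard, one_smul]
  right_inv v := by
    classical
    have hcard : (Fintype.card Q : ℂ) ≠ 0 := Nat.cast_ne_zero.mpr Fintype.card_ne_zero
    ext χ
    have key : ∑ q, (χ q : ℂ) • ∑ ψ : Q →* ℂˣ, (ψ q⁻¹ : ℂ) • v ψ =
        (Fintype.card Q : ℂ) • v χ := by
      have hmul : ∀ (ψ : Q →* ℂˣ) q, (χ q : ℂ) * ψ q⁻¹ = (χ * ψ⁻¹) q := by simp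
      simp_rw [smul_sum, smul_smul, hmul]
      rw [sum_comm]
      simp_rw [← sum_smul, MonoidHom.sum_units_apply_eq_ite, mul_inv_eq_one (G := Q →* ℂˣ),
        ite_smul, zero_smul, sum_ite_eq, if_pos (mem_univ χ)]
    change ∑ q, (χ q : ℂ) • ((Fintype.card Q : ℂ)⁻¹ • _) = v χ
    simp_rw [smul_comm (χ _ : ℂ) (Fintype.card Q : ℂ)⁻¹]
    rw [← smul_sum, key, smul_smul, inv_mul_cancel₀ hcard, one_smul]

theorem fourierEquiv_apply (F : Q → W) (χ : Q →* ℂˣ) :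
    fourierEquiv Q W F χ = ∑ q, (χ q : ℂ) • F q := rfl

theorem fourierEquiv_comp_linearMap (T : W →ₗ[ℂ] W) (F : Q → W) (χ : Q →* ℂˣ) :
    fourierEquiv Q W (T ∘ F) χ = T (fourierEquiv Q W F χ) := by
  simp [fourierEquiv_apply]

theorem fourierEquiv_comp_mul_left (x : Q) (F : Q → W) (χ : Q →* ℂˣ) :
    fourierEquiv Q W (fun q => F (x⁻¹ * q)) χ = (χ x : ℂ) • fourierEquiv Q W F χ := by
  simp only [fourierEquiv_apply, smul_sum]
  rw [← Equiv.sum_comp (Equiv.mulLeft x)]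
  simp only [Equiv.coe_mulLeft, inv_mul_cancel_left, map_mul, Units.val_mul, mul_smul]

end Fourier

section Untwist

variable {K : Type*} [Group K] {W : Type*} [AddCommGroup W] [Module ℂ W]
variable (N : Subgroup K) (π : Representation ℂ K W)

theorem IndSpace.rep_mul_apply_mul (f : IndSpace N (RepRes N π)) (g : K) (h : N) :
    π (g * h) (f.1 (g * h)) = π g (f.1 g) := by
  rw [f.2 g h, map_mul, Module.End.mul_apply]
  change π g (π h (π (h⁻¹ : N) _)) = _
  rw [← Module.End.mul_apply (π h), ← map_mul, Subgroup.coe_inv, mul_inv_cancel, map_one,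
    Module.End.one_apply]

noncomputable def untwistEquiv : IndSpace N (RepRes N π) ≃ₗ[ℂ] (K ⧸ N → W) where
  toFun f := Quotient.lift (fun g => π g (f.1 g)) fun a b hab => by
    rw [← mul_inv_cancel_left a b]
    exact (IndSpace.rep_mul_apply_mul N π f a ⟨_, QuotientGroup.leftRel_apply.mp hab⟩).symm
  map_add' f f' := by ext q; induction q using QuotientGroup.induction_on; simp
  map_smul' c f := by ext q; induction q using QuotientGroup.induction_on; simp
  invFun F := ⟨fun g => π g⁻¹ (F g), fun g h => by
    simp [RepRes, mul_inv_rev, QuotientGroup.mk_mul_of_mem g h.2]⟩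
  left_inv f := by ext g; simp
  right_inv F := by ext q; induction q using QuotientGroup.induction_on; simp

theorem untwistEquiv_mk (f : IndSpace N (RepRes N π)) (g : K) :
    untwistEquiv N π f g = π g (f.1 g) := rfl

theorem untwistEquiv_indRep [N.Normal] (x : K) (f : IndSpace N (RepRes N π)) (q : K ⧸ N) :
    untwistEquiv N π (IndRep N (RepRes N π) x f) q =
      π x (untwistEquiv N π f ((x : K ⧸ N)⁻¹ * q)) := by
  induction q using QuotientGroup.induction_on with | H g =>
  rw [← QuotientGroup.mk_inv, ← QuotientGroup.mk_mul, untwistEquiv_mk, untwistEquiv_mk,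
    ← Module.End.mul_apply, ← map_mul, mul_inv_cancel_left]
  rfl

end Untwist

namespace QuotientGroup

variable {K : Type*} [Group K] {N : Subgroup K} [N.Normal]

abbrev commGroupOfCommutatorMem (hcomm : ∀ a b : K, a * b * a⁻¹ * b⁻¹ ∈ N) :
    CommGroup (K ⧸ N) where
  mul_comm a b := by
    induction a using QuotientGroup.induction_on with | H x =>
    induction b using QuotientGroup.induction_on with | H y =>
    rw [← mk_mul, ← mk_mul, QuotientGroup.eq]
    simpa [mul_assoc] using hcomm y⁻¹ x⁻¹

variable (N) in
def homEquivOfTrivialOn (M : Type*) [Monoid M] :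
    {φ : K →* M // ∀ x ∈ N, φ x = 1} ≃ (K ⧸ N →* M) where
  toFun φ := lift N φ.1 fun x hx => φ.2 x hx
  invFun χ := ⟨χ.comp (mk' N), fun x hx => by simp [(eq_one_iff x).mpr hx]⟩
  left_inv φ := rfl
  right_inv χ := by ext; rfl

end QuotientGroup

theorem repIso_indRep_repRes {K : Type*} [Group K] {W : Type*} [AddCommGroup W] [Module ℂ W]
    (N : Subgroup K) [N.Normal] [Finite (K ⧸ N)] (hcomm : ∀ a b : K, a * b * a⁻¹ * b⁻¹ ∈ N)
    (π : Representation ℂ K W) :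
    RepIso (IndRep N (RepRes N π))
      (PiRep fun ω : {ω : K →* ℂˣ // ∀ x ∈ N, ω x = 1} => TwistRep π ω.1) := by
  let := QuotientGroup.commGroupOfCommutatorMem hcomm
  let : Fintype (K ⧸ N) := Fintype.ofFinite _
  have : NeZero (Monoid.exponent (K ⧸ N)) := ⟨Monoid.exponent_ne_zero_of_finite⟩
  obtain ⟨e⟩ := CommGroup.monoidHom_mulEquiv_of_hasEnoughRootsOfUnity (K ⧸ N) ℂ
  let : Fintype (K ⧸ N →* ℂˣ) := Fintype.ofEquiv _ e.symm.toEquiv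
  refine ⟨(untwistEquiv N π).trans ((fourierEquiv (K ⧸ N) W).trans
    (LinearEquiv.funCongrLeft ℂ W (QuotientGroup.homEquivOfTrivialOn N ℂˣ))), fun x f => ?_⟩
  ext ω
  have hF : untwistEquiv N π (IndRep N (RepRes N π) x f) =
      π x ∘ fun q => untwistEquiv N π f ((x : K ⧸ N)⁻¹ * q) :=
    funext (untwistEquiv_indRep N π x f)
  change fourierEquiv _ _ (untwistEquiv N π (IndRep N (RepRes N π) x f)) _ =
    (ω.1 x : ℂ) • π x (fourierEquiv _ _ (untwistEquiv N π f) _)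
  rw [hF, fourierEquiv_comp_linearMap, fourierEquiv_comp_mul_left, map_smul]
  rfl

theorem statement17_general {G : Type} [Group G] (H : Subgroup G) [H.Normal]
    (hfin : Finite (G ⧸ H)) (hab : ∀ a b : G, a * b * a⁻¹ * b⁻¹ ∈ H)
    {W : Type} [AddCommGroup W] [Module ℂ W]
    (ρ : Representation ℂ ↥H W)
    (G₁ : Subgroup G) (hHG₁ : H ≤ G₁)
    (π₁ : Representation ℂ ↥G₁ W)
    (hext : ∀ (h : G) (hh : h ∈ H), π₁ ⟨h, hHG₁ hh⟩ = ρ ⟨h, hh⟩) :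
    RepIso
      (IndRep (H.subgroupOf G₁) (ρ.comp (Subgroup.subgroupOfEquivOfLe hHG₁).toMonoidHom))
      (PiRep fun ω : {ω : ↥G₁ →* ℂˣ // ∀ x : ↥G₁, (x : G) ∈ H → ω x = 1} =>
        TwistRep π₁ ω.1) := by
  have : H.FiniteIndex := Subgroup.finiteIndex_of_finite_quotient
  have hres : ρ.comp (Subgroup.subgroupOfEquivOfLe hHG₁).toMonoidHom =
      RepRes (H.subgroupOf G₁) π₁ := by
    ext h : 1
    exact (hext h h.2).symm
  rw [hres]
  exact repIso_indRep_repRes (H.subgroupOf G₁) (fun a b => hab a b) π₁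

/-- Let `H ⊴ G` with `G/H` finite abelian, `ρ` an irreducible representation of `H` (with
Schur's lemma for irreducible representations of intermediate subgroups), and `G¹` a
maximal subgroup of `G` containing `H` to which `ρ` extends, with extension `π¹`.  Then
`Ind_H^{G¹} ρ ≅ ⊕_{ω ∈ (G¹/H)^*} π¹ ⊗ ω`. -/
theorem statement17 {G : Type} [Group G] (H : Subgroup G) [H.Normal]
    (hfin : Finite (G ⧸ H)) (hab : ∀ a b : G, a * b * a⁻¹ * b⁻¹ ∈ H)
    {W : Type} [AddCommGroup W] [Module ℂ W]
    (ρ : Representation ℂ ↥H W) (hρ : RepIrreducible ρ)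
    (hschur : ∀ (K : Subgroup G) (σ : Representation ℂ ↥K W), RepIrreducible σ → RepSchur σ)
    (G₁ : Subgroup G) (hHG₁ : H ≤ G₁)
    (π₁ : Representation ℂ ↥G₁ W)
    (hext : ∀ (h : G) (hh : h ∈ H), π₁ ⟨h, hHG₁ hh⟩ = ρ ⟨h, hh⟩)
    (hmax : ∀ (G₂ : Subgroup G) (hle : G₁ ≤ G₂),
      (∃ π₂ : Representation ℂ ↥G₂ W,
        ∀ (h : G) (hh : h ∈ H), π₂ ⟨h, hle (hHG₁ hh)⟩ = ρ ⟨h, hh⟩) → G₂ = G₁) :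
    RepIso
      (IndRep (H.subgroupOf G₁) (ρ.comp (Subgroup.subgroupOfEquivOfLe hHG₁).toMonoidHom))
      (PiRep fun ω : {ω : ↥G₁ →* ℂˣ // ∀ x : ↥G₁, (x : G) ∈ H → ω x = 1} =>
        TwistRep π₁ ω.1) :=
  statement17_general H hfin hab ρ G₁ hHG₁ π₁ hext
end
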